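/- Fix L ≥ 2 and realize spinless fermion operators on (ℂ²)^{⊗L} by the Jordan–Wigner construction c_i = ( ∏_{j<i} (−σ^z_j) ) σ⁻_i, with number operators n_i = c_i† c_i. Let r₁, r₂, …, r_q (2 ≤ q ≤ L) be pairwise distinct indices in {1, …, L}. Define the fermionic bonds f_k = c_{r_k}† c_{r_{k+1}} for k = 1, …, q−1 and the closing bond f_q = c_{r_q}† c_{r₁}, and the nested anticommutators F₁ = f₁, F_k = {F_{k−1}, f_k} for k = 2, …, q. Then F_q = (n_{r_q} − n_{r₁})² · ∏_{m=2}^{q−1} (1 − 2 n_{r_m}). In particular, unlike the corresponding spin computation, the result depends explicitly on the intermediate sites r₂, …, r_{q−1} of the path. -/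
import Mathlib


open Matrix

noncomputable def pauliX : Matrix (Fin 2) (Fin 2) ℂ := !![0, 1; 1, 0]

noncomputable def pauliZ : Matrix (Fin 2) (Fin 2) ℂ := !![1, 0; 0, -1]

/-- The operator acting as the 2×2 matrix `A` on the (1-based) `k`-th tensor factor of
`(ℂ²)^{⊗N} ≅ ℂ^{2^N}` and as the identity on all other factors. -/
noncomputable def siteOp (N : ℕ) (A : Matrix (Fin 2) (Fin 2) ℂ) (k : ℕ) :
    Matrix (Fin N → Fin 2) (Fin N → Fin 2) ℂ :=
  if h : 1 ≤ k ∧ k ≤ N then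
    Matrix.of fun f g =>
      A (f ⟨k - 1, by omega⟩) (g ⟨k - 1, by omega⟩) *
        ∏ j ∈ Finset.univ.erase (⟨k - 1, by omega⟩ : Fin N),
          (if f j = g j then (1 : ℂ) else 0)
  else 1

noncomputable def sigmaPlus : Matrix (Fin 2) (Fin 2) ℂ := !![0, 1; 0, 0]

noncomputable def sigmaMinus : Matrix (Fin 2) (Fin 2) ℂ := !![0, 0; 1, 0]

/-- The Jordan–Wigner fermion operator `c_i = (∏_{j=1}^{i-1} (−σ^z_j)) σ⁻_i`. -/
noncomputable def cOp (N i : ℕ) : Matrix (Fin N → Fin 2) (Fin N → Fin 2) ℂ :=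
  (((List.range (i - 1)).map fun j => -siteOp N pauliZ (j + 1)).prod) * siteOp N sigmaMinus i

/-- The number operator `n_i = c_i† c_i`. -/
noncomputable def nOp (N i : ℕ) : Matrix (Fin N → Fin 2) (Fin N → Fin 2) ℂ :=
  (cOp N i)ᴴ * cOp N i


-- 2x2 matrix identities
lemma zz : pauliZ * pauliZ = 1 := by
  ext i j; fin_cases i <;> fin_cases j <;>
    simp [pauliZ, Matrix.mul_apply, Fin.sum_univ_two, Matrix.one_apply]

lemma zs : pauliZ * sigmaMinus = -(sigmaMinus * pauliZ) := by
  ext i j; fin_cases i <;> fin_cases j <;>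
    simp [pauliZ, sigmaMinus, Matrix.mul_apply, Fin.sum_univ_two]

lemma zp : pauliZ * sigmaPlus = -(sigmaPlus * pauliZ) := by
  ext i j; fin_cases i <;> fin_cases j <;>
    simp [pauliZ, sigmaPlus, Matrix.mul_apply, Fin.sum_univ_two]

lemma ss0 : sigmaMinus * sigmaMinus = 0 := by
  ext i j; fin_cases i <;> fin_cases j <;>
    simp [sigmaMinus, Matrix.mul_apply, Fin.sum_univ_two]

lemma pp0 : sigmaPlus * sigmaPlus = 0 := by
  ext i j; fin_cases i <;> fin_cases j <;>
    simp [sigmaPlus, Matrix.mul_apply, Fin.sum_univ_two]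

lemma ps_sp : sigmaPlus * sigmaMinus + sigmaMinus * sigmaPlus = 1 := by
  ext i j; fin_cases i <;> fin_cases j <;>
    simp [sigmaPlus, sigmaMinus, Matrix.mul_apply, Fin.sum_univ_two, Matrix.one_apply]

lemma sHerm : sigmaMinusᴴ = sigmaPlus := by
  ext i j; fin_cases i <;> fin_cases j <;>
    simp [sigmaPlus, sigmaMinus, Matrix.conjTranspose_apply]

lemma zHerm : pauliZᴴ = pauliZ := by
  ext i j; fin_cases i <;> fin_cases j <;>
    simp [pauliZ, Matrix.conjTranspose_apply]

-- kron
noncomputable def kron {N : ℕ} (B : Fin N → Matrix (Fin 2) (Fin 2) ℂ) :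
    Matrix (Fin N → Fin 2) (Fin N → Fin 2) ℂ :=
  Matrix.of fun f g => ∏ j, B j (f j) (g j)

variable {N : ℕ}

lemma kron_one : kron (fun _ : Fin N => (1 : Matrix (Fin 2) (Fin 2) ℂ)) = 1 := by
  ext f g
  simp only [kron, Matrix.of_apply, Matrix.one_apply]
  by_cases h : f = g
  · subst h; simp
  · rw [if_neg h]
    obtain ⟨j, hj⟩ := Function.ne_iff.mp h
    exact Finset.prod_eq_zero (Finset.mem_univ j) (by simp [hj])

lemma kron_mul (B C : Fin N → Matrix (Fin 2) (Fin 2) ℂ) :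
    kron B * kron C = kron fun j => B j * C j := by
  ext f g
  simp only [kron, Matrix.mul_apply, Matrix.of_apply]
  refine Eq.symm ?_
  calc ∏ j, ∑ x : Fin 2, B j (f j) x * C j x (g j)
      = ∑ h ∈ Fintype.piFinset (fun _ : Fin N => (Finset.univ : Finset (Fin 2))),
          ∏ j, B j (f j) (h j) * C j (h j) (g j) := Finset.prod_univ_sum _ _
    _ = ∑ h : Fin N → Fin 2, (∏ j, B j (f j) (h j)) * ∏ j, C j (h j) (g j) := by
        rw [Fintype.piFinset_univ]
        exact Finset.sum_congr rfl fun h _ => Finset.prod_mul_distrib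

lemma kron_conjT (B : Fin N → Matrix (Fin 2) (Fin 2) ℂ) :
    (kron B)ᴴ = kron fun j => (B j)ᴴ := by
  ext f g
  simp only [kron, Matrix.conjTranspose_apply, Matrix.of_apply]
  exact star_prod _ _

lemma kron_neg_slot (B C : Fin N → Matrix (Fin 2) (Fin 2) ℂ) (t0 : Fin N)
    (h1 : B t0 = -(C t0)) (h2 : ∀ t, t ≠ t0 → B t = C t) :
    kron B = -(kron C) := by
  ext f g
  simp only [kron, Matrix.of_apply, Matrix.neg_apply]
  rw [← Finset.prod_erase_mul Finset.univ _ (Finset.mem_univ t0),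
      ← Finset.prod_erase_mul Finset.univ (fun j => C j (f j) (g j)) (Finset.mem_univ t0)]
  rw [Finset.prod_congr rfl (fun t ht => by rw [h2 t (Finset.ne_of_mem_erase ht)])]
  rw [h1]; simp [mul_comm]

lemma kron_zero_slot (B : Fin N → Matrix (Fin 2) (Fin 2) ℂ) (t0 : Fin N)
    (h1 : B t0 = 0) : kron B = 0 := by
  ext f g
  simp only [kron, Matrix.of_apply, Matrix.zero_apply]
  exact Finset.prod_eq_zero (Finset.mem_univ t0) (by simp [h1])

lemma kron_add_slot (B C D : Fin N → Matrix (Fin 2) (Fin 2) ℂ) (t0 : Fin N)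
    (h1 : D t0 = B t0 + C t0) (h2 : ∀ t, t ≠ t0 → B t = C t ∧ D t = B t) :
    kron B + kron C = kron D := by
  ext f g
  simp only [kron, Matrix.of_apply, Matrix.add_apply]
  rw [← Finset.prod_erase_mul Finset.univ _ (Finset.mem_univ t0),
      ← Finset.prod_erase_mul Finset.univ (fun j => C j (f j) (g j)) (Finset.mem_univ t0),
      ← Finset.prod_erase_mul Finset.univ (fun j => D j (f j) (g j)) (Finset.mem_univ t0)]
  have e1 : ∀ t ∈ Finset.univ.erase t0, C t (f t) (g t) = B t (f t) (g t) := by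
    intro t ht; rw [(h2 t (Finset.ne_of_mem_erase ht)).1]
  have e2 : ∀ t ∈ Finset.univ.erase t0, D t (f t) (g t) = B t (f t) (g t) := by
    intro t ht; rw [(h2 t (Finset.ne_of_mem_erase ht)).2]
  rw [Finset.prod_congr rfl e1, Finset.prod_congr rfl e2, h1]
  simp [Matrix.add_apply, mul_add]

lemma siteOp_eq_kron (A : Matrix (Fin 2) (Fin 2) ℂ) (k : ℕ) (h1 : 1 ≤ k) (h2 : k ≤ N) :
    siteOp N A k =
      kron (fun j => if (j : ℕ) = k - 1 then A else 1) := by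
  have hk : k - 1 < N := by omega
  ext f g
  rw [siteOp, dif_pos ⟨h1, h2⟩]
  simp only [kron, Matrix.of_apply]
  rw [← Finset.prod_erase_mul Finset.univ _ (Finset.mem_univ (⟨k - 1, hk⟩ : Fin N))]
  have e : ∀ t ∈ Finset.univ.erase (⟨k - 1, hk⟩ : Fin N),
      (if (t : ℕ) = k - 1 then A else 1) (f t) (g t)
        = if f t = g t then (1 : ℂ) else 0 := by
    intro t ht
    have : (t : ℕ) ≠ k - 1 := by
      intro h; exact Finset.ne_of_mem_erase ht (Fin.ext h)
    rw [if_neg this, Matrix.one_apply]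
  rw [Finset.prod_congr rfl e]
  simp [mul_comm]

/-- The JW slot function with head matrix `M` at 1-based site `i`. -/
noncomputable def jwFun (N : ℕ) (M : Matrix (Fin 2) (Fin 2) ℂ) (i : ℕ) : Fin N → Matrix (Fin 2) (Fin 2) ℂ :=
  fun t => if (t : ℕ) < i - 1 then pauliZ else if (t : ℕ) = i - 1 then M else 1

lemma string_eq (m : ℕ) (hm : m ≤ N) :
    ((List.range m).map fun j => -siteOp N pauliZ (j + 1)).prod
      = ((-1 : ℂ)) ^ m • kron (fun t : Fin N => if (t : ℕ) < m then pauliZ else 1) := by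
  induction m with
  | zero => simpa using kron_one.symm
  | succ m ih =>
    rw [List.range_succ, List.map_append, List.prod_append]
    simp only [List.map_cons, List.map_nil, List.prod_cons, List.prod_nil, mul_one]
    rw [ih (by omega), siteOp_eq_kron pauliZ (m + 1) (by omega) (by omega)]
    have : -kron (fun j : Fin N => if (j : ℕ) = m + 1 - 1 then pauliZ else 1)
        = (-1 : ℂ) • kron (fun j : Fin N => if (j : ℕ) = m then pauliZ else 1) := by
      simp
    rw [this, smul_mul_assoc, mul_smul_comm, smul_smul, kron_mul, ← pow_succ]
    have hfun : (fun j : Fin N => (if (j : ℕ) < m then pauliZ else 1) *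
          (if (j : ℕ) = m then pauliZ else 1))
        = (fun t : Fin N => if (t : ℕ) < m + 1 then pauliZ else 1) := by
      funext t
      rcases lt_trichotomy (t : ℕ) m with h | h | h
      · simp [h, Nat.lt_succ_of_lt h, Nat.ne_of_lt h]
      · simp [h]
      · have h1 : ¬ (t : ℕ) < m := by omega
        have h2 : (t : ℕ) ≠ m := by omega
        have h3 : ¬ (t : ℕ) < m + 1 := by omega
        simp [h1, h2, h3]
    rw [hfun]

lemma cOp_eq_kron (i : ℕ) (h1 : 1 ≤ i) (h2 : i ≤ N) :
    cOp N i = ((-1 : ℂ)) ^ (i - 1) • kron (jwFun N sigmaMinus i) := by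
  rw [cOp, string_eq (i - 1) (by omega), siteOp_eq_kron sigmaMinus i h1 h2,
    smul_mul_assoc, kron_mul]
  have hfun : (fun j : Fin N => (if (j : ℕ) < i - 1 then pauliZ else 1) *
        (if (j : ℕ) = i - 1 then sigmaMinus else 1))
      = jwFun N sigmaMinus i := by
    funext t
    unfold jwFun
    rcases lt_trichotomy (t : ℕ) (i - 1) with h | h | h
    · simp [h, Nat.ne_of_lt h]
    · simp [h]
    · have h1' : ¬ (t : ℕ) < i - 1 := by omega
      have h2' : (t : ℕ) ≠ i - 1 := by omega
      simp [h1', h2']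
  rw [hfun]

noncomputable def cOpK (N : ℕ) (M : Matrix (Fin 2) (Fin 2) ℂ) (i : ℕ) := ((-1 : ℂ)) ^ (i - 1) • kron (jwFun N M i)

lemma cOpK_conjT (i : ℕ) : (cOpK N sigmaMinus i)ᴴ = cOpK N sigmaPlus i := by
  unfold cOpK
  rw [Matrix.conjTranspose_smul, kron_conjT]
  have h1 : star ((-1 : ℂ) ^ (i - 1)) = (-1 : ℂ) ^ (i - 1) := by simp
  have h2 : (fun j : Fin N => (jwFun N sigmaMinus i j)ᴴ) = jwFun N sigmaPlus i := by
    funext t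
    unfold jwFun
    split_ifs <;> simp [zHerm, sHerm]
  rw [h1, h2]

/-- generic anticommutation of two JW kron factors at distinct sites, head matrices
anticommuting with `pauliZ`. -/
lemma jw_anti_lt (M M' : Matrix (Fin 2) (Fin 2) ℂ)
    (hM : pauliZ * M = -(M * pauliZ)) (i j : ℕ)
    (h1 : 1 ≤ i) (hij : i < j) (hjN : j ≤ N) :
    kron (jwFun N M i) * kron (jwFun N M' j)
      = -(kron (jwFun N M' j) * kron (jwFun N M i)) := by
  have hiN : i - 1 < N := by omega
  rw [kron_mul, kron_mul, ← neg_neg (kron fun t => jwFun N M i t * jwFun N M' j t)]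
  congr 1
  refine (kron_neg_slot _ _ (⟨i - 1, hiN⟩ : Fin N) ?_ ?_).symm
  · show jwFun N M' j (⟨i - 1, hiN⟩) * jwFun N M i (⟨i - 1, hiN⟩)
      = -(jwFun N M i (⟨i - 1, hiN⟩) * jwFun N M' j (⟨i - 1, hiN⟩))
    unfold jwFun
    have c1 : (i:ℕ) - 1 < j - 1 := by omega
    simp only [c1, if_pos, lt_irrefl, if_neg, if_true]
    simp only [show ¬ (i - 1 < i - 1) from lt_irrefl _, if_false, if_pos rfl]
    exact hM
  · intro t ht
    have htne : (t : ℕ) ≠ i - 1 := fun h => ht (Fin.ext h)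
    show jwFun N M' j t * jwFun N M i t = jwFun N M i t * jwFun N M' j t
    unfold jwFun
    rcases Nat.lt_or_ge (t : ℕ) (i - 1) with h | h
    · have : (t : ℕ) < j - 1 := by omega
      simp [h, this]
    · have h1' : ¬ (t : ℕ) < i - 1 := by omega
      simp only [h1', if_false, if_neg htne]
      split_ifs <;> simp

lemma cOpK_anti (M M' : Matrix (Fin 2) (Fin 2) ℂ)
    (hM : pauliZ * M = -(M * pauliZ)) (hM' : pauliZ * M' = -(M' * pauliZ))
    (i j : ℕ) (h1 : 1 ≤ i) (h2 : i ≤ N) (h3 : 1 ≤ j) (h4 : j ≤ N) (hij : i ≠ j) :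
    cOpK N M i * cOpK N M' j = -(cOpK N M' j * cOpK N M i) := by
  unfold cOpK
  rw [smul_mul_assoc, mul_smul_comm, smul_smul, smul_mul_assoc, mul_smul_comm, smul_smul,
    mul_comm ((-1 : ℂ) ^ (j - 1)), ← smul_neg]
  congr 1
  rcases Nat.lt_or_ge i j with h | h
  · exact jw_anti_lt M M' hM i j h1 h h4
  · have : j < i := by omega
    rw [jw_anti_lt M' M hM' j i h3 this h2, neg_neg]

lemma cOpK_sq_zero (M : Matrix (Fin 2) (Fin 2) ℂ) (hM2 : M * M = 0)
    (i : ℕ) (h1 : 1 ≤ i) (h2 : i ≤ N) :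
    cOpK N M i * cOpK N M i = 0 := by
  have hiN : i - 1 < N := by omega
  unfold cOpK
  rw [smul_mul_assoc, mul_smul_comm, smul_smul, kron_mul]
  rw [kron_zero_slot _ (⟨i - 1, hiN⟩ : Fin N) (by
    show jwFun N M i ⟨i - 1, hiN⟩ * jwFun N M i ⟨i - 1, hiN⟩ = 0
    unfold jwFun
    simp [hM2])]
  simp

lemma cOpK_car (i : ℕ) (h1 : 1 ≤ i) (h2 : i ≤ N) :
    cOpK N sigmaMinus i * cOpK N sigmaPlus i + cOpK N sigmaPlus i * cOpK N sigmaMinus i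
      = 1 := by
  have hiN : i - 1 < N := by omega
  set t0 : Fin N := ⟨i - 1, hiN⟩ with ht0
  have hs : ((-1 : ℂ) ^ (i - 1)) * ((-1 : ℂ) ^ (i - 1)) = 1 := by
    rw [← pow_add, ← two_mul, pow_mul]; norm_num
  unfold cOpK
  rw [smul_mul_assoc, mul_smul_comm, smul_smul, kron_mul,
      smul_mul_assoc, mul_smul_comm, smul_smul, kron_mul, hs, one_smul, one_smul]
  rw [kron_add_slot _ _
    (fun t : Fin N => if t = t0 then (1 : Matrix (Fin 2) (Fin 2) ℂ)
      else jwFun N sigmaMinus i t * jwFun N sigmaPlus i t) t0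
    (by
      simp only [if_pos rfl]
      show (1 : Matrix (Fin 2) (Fin 2) ℂ)
        = jwFun N sigmaMinus i t0 * jwFun N sigmaPlus i t0
          + jwFun N sigmaPlus i t0 * jwFun N sigmaMinus i t0
      unfold jwFun
      simp only [ht0, lt_irrefl, if_neg, if_false, if_pos rfl]
      rw [add_comm]
      exact ps_sp.symm)
    (by
      intro t ht
      have htne : (t : ℕ) ≠ i - 1 := fun h => ht (Fin.ext h)
      constructor
      · show jwFun N sigmaMinus i t * jwFun N sigmaPlus i t
          = jwFun N sigmaPlus i t * jwFun N sigmaMinus i t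
        unfold jwFun
        split_ifs <;> simp
      · show (if t = t0 then (1 : Matrix (Fin 2) (Fin 2) ℂ)
            else jwFun N sigmaMinus i t * jwFun N sigmaPlus i t)
            = jwFun N sigmaMinus i t * jwFun N sigmaPlus i t
        rw [if_neg ht])]
  rw [show (fun t : Fin N => if t = t0 then (1 : Matrix (Fin 2) (Fin 2) ℂ)
      else jwFun N sigmaMinus i t * jwFun N sigmaPlus i t)
      = fun _ : Fin N => (1 : Matrix (Fin 2) (Fin 2) ℂ) from ?_, kron_one]
  funext t
  by_cases h : t = t0
  · rw [if_pos h]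
  · rw [if_neg h]
    have htne : (t : ℕ) ≠ i - 1 := fun hh => h (Fin.ext hh)
    unfold jwFun
    split_ifs with hlt
    · exact zz
    · simp

section Loop
variable {R : Type*} [Ring R] (q : ℕ) (a b : ℕ → R)

structure FermionRel (q : ℕ) (a b : ℕ → R) : Prop where
  haa : ∀ k l, 1 ≤ k → k ≤ q → 1 ≤ l → l ≤ q → k ≠ l → a k * a l = -(a l * a k)
  hbb : ∀ k l, 1 ≤ k → k ≤ q → 1 ≤ l → l ≤ q → k ≠ l → b k * b l = -(b l * b k)
  hab : ∀ k l, 1 ≤ k → k ≤ q → 1 ≤ l → l ≤ q → k ≠ l → a k * b l = -(b l * a k)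
  ha0 : ∀ k, 1 ≤ k → k ≤ q → a k * a k = 0
  hcar : ∀ k, 1 ≤ k → k ≤ q → a k * b k = 1 - b k * a k

variable {q a b}

namespace FermionRel

variable (hc : FermionRel q a b)

/-- shorthand for validity -/
def V (q k : ℕ) : Prop := 1 ≤ k ∧ k ≤ q

include hc

lemma n_comm_a {k l : ℕ} (hk : 1 ≤ k) (hk' : k ≤ q) (hl : 1 ≤ l) (hl' : l ≤ q)
    (hne : k ≠ l) : Commute (b k * a k) (a l) := by
  have h1 : a k * a l = -(a l * a k) := hc.haa k l hk hk' hl hl' hne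
  have h2 : a l * b k = -(b k * a l) := hc.hab l k hl hl' hk hk' (Ne.symm hne)
  show b k * a k * a l = a l * (b k * a k)
  calc b k * a k * a l = b k * (a k * a l) := by rw [mul_assoc]
    _ = b k * (-(a l * a k)) := by rw [h1]
    _ = -(b k * a l) * a k := by noncomm_ring
    _ = (a l * b k) * a k := by rw [h2]
    _ = a l * (b k * a k) := by rw [mul_assoc]

lemma n_comm_b {k l : ℕ} (hk : 1 ≤ k) (hk' : k ≤ q) (hl : 1 ≤ l) (hl' : l ≤ q)
    (hne : k ≠ l) : Commute (b k * a k) (b l) := by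
  have h1 : a k * b l = -(b l * a k) := hc.hab k l hk hk' hl hl' hne
  have h2 : b k * b l = -(b l * b k) := hc.hbb k l hk hk' hl hl' hne
  show b k * a k * b l = b l * (b k * a k)
  calc b k * a k * b l = b k * (a k * b l) := by rw [mul_assoc]
    _ = b k * (-(b l * a k)) := by rw [h1]
    _ = -(b k * b l) * a k := by noncomm_ring
    _ = (b l * b k) * a k := by
          have h2' : b l * b k = -(b k * b l) := hc.hbb l k hl hl' hk hk' (Ne.symm hne)
          rw [h2']
    _ = b l * (b k * a k) := by rw [mul_assoc]

lemma n_comm_bond {k u v : ℕ} (hk : 1 ≤ k) (hk' : k ≤ q) (hu : 1 ≤ u) (hu' : u ≤ q)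
    (hv : 1 ≤ v) (hv' : v ≤ q) (hku : k ≠ u) (hkv : k ≠ v) :
    Commute (b k * a k) (b u * a v) :=
  (hc.n_comm_b hk hk' hu hu' hku).mul_right (hc.n_comm_a hk hk' hv hv' hkv)

lemma n_idem {k : ℕ} (hk : 1 ≤ k) (hk' : k ≤ q) :
    (b k * a k) * (b k * a k) = b k * a k := by
  have h1 : a k * b k = 1 - b k * a k := hc.hcar k hk hk'
  have h2 : a k * a k = 0 := hc.ha0 k hk hk'
  calc (b k * a k) * (b k * a k) = b k * ((a k * b k) * a k) := by noncomm_ring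
    _ = b k * ((1 - b k * a k) * a k) := by rw [h1]
    _ = b k * a k - (b k * b k) * (a k * a k) := by noncomm_ring
    _ = b k * a k := by rw [h2]; noncomm_ring

/-- the key anticommutator identity along the path -/
lemma bracket {u v w : ℕ} (hu : 1 ≤ u) (hu' : u ≤ q) (hv : 1 ≤ v) (hv' : v ≤ q)
    (hw : 1 ≤ w) (hw' : w ≤ q) (huv : u ≠ v) (hvw : v ≠ w) (huw : u ≠ w) :
    (b u * a v) * (b v * a w) + (b v * a w) * (b u * a v)
      = (b u * a w) * (1 - (b v * a v) - (b v * a v)) := by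
  have hcarv : a v * b v = 1 - b v * a v := hc.hcar v hv hv'
  have hwu : a w * b u = -(b u * a w) := hc.hab w u hw hw' hu hu' (Ne.symm huw)
  have hwv : a w * a v = -(a v * a w) := hc.haa w v hw hw' hv hv' (Ne.symm hvw)
  have hvu : b v * b u = -(b u * b v) := hc.hbb v u hv hv' hu hu' (fun h => huv h.symm)
  have hwv' : a w * b v = -(b v * a w) := hc.hab w v hw hw' hv hv' (Ne.symm hvw)
  have T1 : (b u * a v) * (b v * a w) = b u * a w - b u * b v * a v * a w := by
    calc (b u * a v) * (b v * a w) = b u * ((a v * b v) * a w) := by noncomm_ring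
      _ = b u * ((1 - b v * a v) * a w) := by rw [hcarv]
      _ = b u * a w - b u * b v * a v * a w := by noncomm_ring
  have T2 : (b v * a w) * (b u * a v) = -(b u * b v * a v * a w) := by
    calc (b v * a w) * (b u * a v) = b v * (a w * b u) * a v := by noncomm_ring
      _ = b v * (-(b u * a w)) * a v := by rw [hwu]
      _ = -(b v * b u * (a w * a v)) := by noncomm_ring
      _ = -(b v * b u * (-(a v * a w))) := by rw [hwv]
      _ = (b v * b u) * a v * a w := by noncomm_ring
      _ = (-(b u * b v)) * a v * a w := by rw [hvu]
      _ = -(b u * b v * a v * a w) := by noncomm_ring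
  have T3 : b u * a w * (b v * a v) = b u * b v * a v * a w := by
    calc b u * a w * (b v * a v) = b u * (a w * b v) * a v := by noncomm_ring
      _ = b u * (-(b v * a w)) * a v := by rw [hwv']
      _ = -(b u * b v * (a w * a v)) := by noncomm_ring
      _ = -(b u * b v * (-(a v * a w))) := by rw [hwv]
      _ = b u * b v * a v * a w := by noncomm_ring
  calc (b u * a v) * (b v * a w) + (b v * a w) * (b u * a v)
      = (b u * a w - b u * b v * a v * a w) + (-(b u * b v * a v * a w)) := by rw [T1, T2]
    _ = b u * a w - (b u * b v * a v * a w) - (b u * b v * a v * a w) := by noncomm_ring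
    _ = b u * a w - b u * a w * (b v * a v) - b u * a w * (b v * a v) := by rw [T3]
    _ = (b u * a w) * (1 - (b v * a v) - (b v * a v)) := by noncomm_ring

/-- the closing anticommutator -/
lemma bracket_close {u v : ℕ} (hu : 1 ≤ u) (hu' : u ≤ q) (hv : 1 ≤ v) (hv' : v ≤ q)
    (huv : u ≠ v) :
    (b u * a v) * (b v * a u) + (b v * a u) * (b u * a v)
      = (b v * a v - b u * a u) ^ 2 := by
  have hcarv : a v * b v = 1 - b v * a v := hc.hcar v hv hv'
  have hcaru : a u * b u = 1 - b u * a u := hc.hcar u hu hu'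
  have hvu : a v * a u = -(a u * a v) := hc.haa v u hv hv' hu hu' huv.symm
  have hbvu : b v * b u = -(b u * b v) := hc.hbb v u hv hv' hu hu' huv.symm
  have hauv : a u * b v = -(b v * a u) := hc.hab u v hu hu' hv hv' huv
  have havu : a u * a v = -(a v * a u) := hc.haa u v hu hu' hv hv' huv
  have T1 : (b u * a v) * (b v * a u) = b u * a u - b u * b v * a v * a u := by
    calc (b u * a v) * (b v * a u) = b u * ((a v * b v) * a u) := by noncomm_ring
      _ = b u * ((1 - b v * a v) * a u) := by rw [hcarv]
      _ = b u * a u - b u * b v * a v * a u := by noncomm_ring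
  have T2 : (b v * a u) * (b u * a v) = b v * a v - b u * b v * a v * a u := by
    calc (b v * a u) * (b u * a v) = b v * ((a u * b u) * a v) := by noncomm_ring
      _ = b v * ((1 - b u * a u) * a v) := by rw [hcaru]
      _ = b v * a v - b v * b u * (a u * a v) := by noncomm_ring
      _ = b v * a v - (-(b u * b v)) * (a u * a v) := by rw [hbvu]
      _ = b v * a v + b u * b v * (a u * a v) := by noncomm_ring
      _ = b v * a v + b u * b v * (-(a v * a u)) := by rw [havu]
      _ = b v * a v - b u * b v * a v * a u := by noncomm_ring
  have T3 : (b u * a u) * (b v * a v) = b u * b v * a v * a u := by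
    calc (b u * a u) * (b v * a v) = b u * (a u * b v) * a v := by noncomm_ring
      _ = b u * (-(b v * a u)) * a v := by rw [hauv]
      _ = -(b u * b v * (a u * a v)) := by noncomm_ring
      _ = -(b u * b v * (-(a v * a u))) := by rw [havu]
      _ = b u * b v * a v * a u := by noncomm_ring
  have hcomm : (b u * a u) * (b v * a v) = (b v * a v) * (b u * a u) :=
    hc.n_comm_bond hu hu' hv hv' hv hv' huv huv
  have hiu : (b u * a u) * (b u * a u) = b u * a u := hc.n_idem hu hu'
  have hiv : (b v * a v) * (b v * a v) = b v * a v := hc.n_idem hv hv'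
  have expand : (b v * a v - b u * a u) ^ 2
      = b v * a v + b u * a u - (b u * a u) * (b v * a v) - (b u * a u) * (b v * a v) := by
    have : (b v * a v - b u * a u) ^ 2
        = (b v * a v) * (b v * a v) + (b u * a u) * (b u * a u)
          - (b v * a v) * (b u * a u) - (b u * a u) * (b v * a v) := by noncomm_ring
    rw [this, hiu, hiv, ← hcomm]
  rw [T1, T2, expand, ← T3]
  noncomm_ring

omit hc in
lemma acm_mul_right_comm (x y p : R) (h : Commute p y) :
    (x * p) * y + y * (x * p) = (x * y + y * x) * p := by
  have h1 : (x * p) * y = (x * y) * p := by rw [mul_assoc, h.eq, ← mul_assoc]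
  have h2 : y * (x * p) = (y * x) * p := (mul_assoc _ _ _).symm
  rw [h1, h2, add_mul]

omit hc in
lemma prod_commute (y : R) (k : ℕ)
    (h : ∀ m, m < k → Commute (b (m + 2) * a (m + 2)) y) :
    Commute (((List.range k).map fun m => 1 - 2 • (b (m + 2) * a (m + 2))).prod) y := by
  induction k with
  | zero => simpa using Commute.one_left y
  | succ k ih =>
    rw [List.range_succ, List.map_append, List.prod_append]
    simp only [List.map_cons, List.map_nil, List.prod_cons, List.prod_nil, mul_one]
    exact (ih fun m hm => h m (by omega)).mul_left
      ((Commute.one_left y).sub_left ((h k (by omega)).smul_left 2))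

lemma core (hq : 2 ≤ q) : ∀ k, k ≤ q - 2 →
    List.foldl (fun A B => A * B + B * A) (b 1 * a 2)
      ((List.range k).map fun m => b (m + 2) * a (m + 3))
    = b 1 * a (k + 2) *
        ((List.range k).map fun m => 1 - 2 • (b (m + 2) * a (m + 2))).prod := by
  intro k
  induction k with
  | zero => simp
  | succ k ih =>
    intro hk
    have hk' : k ≤ q - 2 := by omega
    rw [List.range_succ, List.map_append, List.foldl_append]
    simp only [List.map_cons, List.map_nil, List.foldl_cons, List.foldl_nil]
    rw [ih hk']
    have hPy : Commute
        (((List.range k).map fun m => 1 - 2 • (b (m + 2) * a (m + 2))).prod)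
        (b (k + 2) * a (k + 3)) := by
      refine prod_commute _ _ fun m hm => ?_
      exact hc.n_comm_bond (by omega) (by omega) (by omega) (by omega)
        (by omega) (by omega) (by omega) (by omega)
    rw [acm_mul_right_comm _ _ _ hPy,
      hc.bracket (u := 1) (v := k + 2) (w := k + 3) (by omega) (by omega) (by omega)
        (by omega) (by omega) (by omega) (by omega) (by omega) (by omega)]
    have h2n : (1 : R) - (b (k + 2) * a (k + 2)) - (b (k + 2) * a (k + 2))
        = 1 - 2 • (b (k + 2) * a (k + 2)) := by
      rw [two_nsmul, ← sub_sub]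
    rw [h2n]
    have hcommP : Commute
        (((List.range k).map fun m => 1 - 2 • (b (m + 2) * a (m + 2))).prod)
        (1 - 2 • (b (k + 2) * a (k + 2))) := by
      refine prod_commute _ _ fun m hm => ?_
      exact (Commute.one_right _).sub_right
        ((hc.n_comm_bond (by omega) (by omega) (by omega) (by omega)
          (by omega) (by omega) (by omega) (by omega)).smul_right 2)
    rw [show k + 1 + 2 = k + 3 from by omega, List.map_append, List.prod_append]
    simp only [List.map_cons, List.map_nil, List.prod_cons, List.prod_nil, mul_one]
    rw [mul_assoc (b 1 * a (k + 3)), ← hcommP.symm.eq, ← mul_assoc]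

theorem main (hq : 2 ≤ q) :
    List.foldl (fun A B => A * B + B * A) (b 1 * a 2)
      ((List.range (q - 1)).map fun k =>
        if k + 2 = q then b q * a 1 else b (k + 2) * a (k + 3))
    = (b q * a q - b 1 * a 1) ^ 2 *
        ((List.range (q - 2)).map fun m => 1 - 2 • (b (m + 2) * a (m + 2))).prod := by
  have hq1 : q - 1 = (q - 2) + 1 := by omega
  rw [hq1, List.range_succ, List.map_append, List.foldl_append]
  have hmap : (List.range (q - 2)).map
        (fun k => if k + 2 = q then b q * a 1 else b (k + 2) * a (k + 3))
      = (List.range (q - 2)).map (fun m => b (m + 2) * a (m + 3)) := by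
    apply List.map_congr_left
    intro k hk
    rw [List.mem_range] at hk
    rw [if_neg (by omega)]
  rw [hmap, hc.core hq (q - 2) le_rfl]
  simp only [List.map_cons, List.map_nil, List.foldl_cons, List.foldl_nil]
  rw [if_pos (by omega)]
  have hq2 : q - 2 + 2 = q := by omega
  rw [hq2]
  have hPy : Commute
      (((List.range (q - 2)).map fun m => 1 - 2 • (b (m + 2) * a (m + 2))).prod)
      (b q * a 1) := by
    refine prod_commute _ _ fun m hm => ?_
    exact hc.n_comm_bond (by omega) (by omega) (by omega) (by omega)
      (by omega) (by omega) (by omega) (by omega)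
  rw [acm_mul_right_comm _ _ _ hPy,
    hc.bracket_close (u := 1) (v := q) (by omega) (by omega) (by omega)
      (by omega) (by omega)]

end FermionRel
end Loop


-- Concrete CAR lemmas for cOp
variable {N : ℕ}

lemma cOp_eq_cOpK (i : ℕ) (h1 : 1 ≤ i) (h2 : i ≤ N) :
    cOp N i = cOpK N sigmaMinus i := cOp_eq_kron i h1 h2

lemma cOp_dag_eq_cOpK (i : ℕ) (h1 : 1 ≤ i) (h2 : i ≤ N) :
    (cOp N i)ᴴ = cOpK N sigmaPlus i := by
  rw [cOp_eq_cOpK i h1 h2, cOpK_conjT]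


/-- **Nested anticommutators of fermionic bonds along a closed path retain a memory of the
intermediate sites**: with bonds `f_k = c_{r_k}† c_{r_{k+1}}` and closing bond
`f_q = c_{r_q}† c_{r_1}`, the nested anticommutator equals
`(n_{r_q} − n_{r_1})² ∏_{m=2}^{q−1} (1 − 2 n_{r_m})`. -/
theorem fermion_loop_nested_anticommutator (L q : ℕ) (hL : 2 ≤ L) (hq : 2 ≤ q) (hqL : q ≤ L)
    (r : ℕ → ℕ)
    (hrange : ∀ k : ℕ, 1 ≤ k → k ≤ q → 1 ≤ r k ∧ r k ≤ L)
    (hdistinct : ∀ k l : ℕ, 1 ≤ k → k ≤ q → 1 ≤ l → l ≤ q → k ≠ l → r k ≠ r l) :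
    List.foldl (fun A B => A * B + B * A)
      ((cOp L (r 1))ᴴ * cOp L (r 2))
      ((List.range (q - 1)).map fun k =>
        if k + 2 = q then (cOp L (r q))ᴴ * cOp L (r 1)
        else (cOp L (r (k + 2)))ᴴ * cOp L (r (k + 3)))
      = (nOp L (r q) - nOp L (r 1)) ^ 2 *
          ((List.range (q - 2)).map fun m => 1 - (2 : ℂ) • nOp L (r (m + 2))).prod := by
  set a : ℕ → Matrix (Fin L → Fin 2) (Fin L → Fin 2) ℂ := fun k => cOp L (r k) with ha
  set b : ℕ → Matrix (Fin L → Fin 2) (Fin L → Fin 2) ℂ := fun k => (cOp L (r k))ᴴ with hb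
  have hval : ∀ k, 1 ≤ k → k ≤ q → 1 ≤ r k ∧ r k ≤ L := hrange
  have hc : FermionRel q a b := by
    constructor
    · intro k l hk hk' hl hl' hne
      obtain ⟨h1, h2⟩ := hval k hk hk'
      obtain ⟨h3, h4⟩ := hval l hl hl'
      show cOp L (r k) * cOp L (r l) = -(cOp L (r l) * cOp L (r k))
      rw [cOp_eq_cOpK (r k) h1 h2, cOp_eq_cOpK (r l) h3 h4]
      exact cOpK_anti _ _ zs zs _ _ h1 h2 h3 h4 (hdistinct k l hk hk' hl hl' hne)
    · intro k l hk hk' hl hl' hne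
      obtain ⟨h1, h2⟩ := hval k hk hk'
      obtain ⟨h3, h4⟩ := hval l hl hl'
      show (cOp L (r k))ᴴ * (cOp L (r l))ᴴ = -((cOp L (r l))ᴴ * (cOp L (r k))ᴴ)
      rw [cOp_dag_eq_cOpK (r k) h1 h2, cOp_dag_eq_cOpK (r l) h3 h4]
      exact cOpK_anti _ _ zp zp _ _ h1 h2 h3 h4 (hdistinct k l hk hk' hl hl' hne)
    · intro k l hk hk' hl hl' hne
      obtain ⟨h1, h2⟩ := hval k hk hk'
      obtain ⟨h3, h4⟩ := hval l hl hl'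
      show cOp L (r k) * (cOp L (r l))ᴴ = -((cOp L (r l))ᴴ * cOp L (r k))
      rw [cOp_eq_cOpK (r k) h1 h2, cOp_dag_eq_cOpK (r l) h3 h4]
      exact cOpK_anti _ _ zs zp _ _ h1 h2 h3 h4 (hdistinct k l hk hk' hl hl' hne)
    · intro k hk hk'
      obtain ⟨h1, h2⟩ := hval k hk hk'
      show cOp L (r k) * cOp L (r k) = 0
      rw [cOp_eq_cOpK (r k) h1 h2]
      exact cOpK_sq_zero _ ss0 _ h1 h2
    · intro k hk hk'
      obtain ⟨h1, h2⟩ := hval k hk hk'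
      show cOp L (r k) * (cOp L (r k))ᴴ = 1 - (cOp L (r k))ᴴ * cOp L (r k)
      rw [cOp_dag_eq_cOpK (r k) h1 h2, cOp_eq_cOpK (r k) h1 h2]
      exact eq_sub_of_add_eq (cOpK_car _ h1 h2)
  have key := hc.main hq
  have hsm : ∀ M : Matrix (Fin L → Fin 2) (Fin L → Fin 2) ℂ, (2 : ℂ) • M = 2 • M := by
    intro M
    rw [← Nat.cast_smul_eq_nsmul ℂ 2 M]
    norm_num
  have hrhs : ((List.range (q - 2)).map fun m => 1 - (2 : ℂ) • nOp L (r (m + 2))).prod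
      = ((List.range (q - 2)).map fun m => 1 - 2 • (b (m + 2) * a (m + 2))).prod := by
    congr 1
    apply List.map_congr_left
    intro m _
    rw [hsm]
    rfl
  rw [hrhs]
  have hn1 : nOp L (r q) = b q * a q := rfl
  have hn2 : nOp L (r 1) = b 1 * a 1 := rfl
  rw [hn1, hn2]
  exact key
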